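/- Under the same change of basis (e¹ = (θ¹+θ⁷)/2, e⁵ = (−θ¹+θ⁷)/2, e² = (√6/2)(θ²−θ⁶), e⁶ = (√6/2)(θ²+θ⁶), e³ = (√15/2)(θ³+θ⁵), e⁷ = (√15/2)(−θ³+θ⁵), e⁴ = √10 θ⁴), the three-form φ = 3(θ²∧θ³∧θ⁷ + θ¹∧θ⁵∧θ⁶) + θ⁴∧(θ¹∧θ⁷ + 6θ²∧θ⁶ − 15θ³∧θ⁵) equals the standard split G₂ three-form e¹²³ − e¹⁴⁵ − e¹⁶⁷ − e²⁴⁶ + e²⁵⁷ + e³⁴⁷ + e³⁵⁶ (where e^{ijk} = eⁱ∧eʲ∧eᵏ), up to an overall nonzero constant multiple. -/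
import Mathlib

open ExteriorAlgebra

/-- The vectors of the orthonormal-type frame e¹,...,e⁷ in terms of the sextic coframe
θ¹,...,θ⁷ (indices shifted down by one). -/
noncomputable def Evec (θ : Fin 7 → (Fin 7 → ℝ)) : Fin 7 → (Fin 7 → ℝ)
  | 0 => (1 / 2 : ℝ) • (θ 0 + θ 6)
  | 1 => (Real.sqrt 6 / 2) • (θ 1 - θ 5)
  | 2 => (Real.sqrt 15 / 2) • (θ 2 + θ 4)
  | 3 => Real.sqrt 10 • θ 3
  | 4 => (1 / 2 : ℝ) • (θ 6 - θ 0)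
  | 5 => (Real.sqrt 6 / 2) • (θ 1 + θ 5)
  | 6 => (Real.sqrt 15 / 2) • (θ 4 - θ 2)

private lemma sw (x y : Fin 7 → ℝ) : ι ℝ x * ι ℝ y = -(ι ℝ y * ι ℝ x) := by
  exact eq_neg_of_add_eq_zero_left (ι_add_mul_swap x y)

private lemma p1 (x y z : Fin 7 → ℝ) :
    ι ℝ x * (ι ℝ z * ι ℝ y) = -(ι ℝ x * (ι ℝ y * ι ℝ z)) := by
  rw [sw z y, mul_neg]

private lemma p2 (x y z : Fin 7 → ℝ) :
    ι ℝ y * (ι ℝ x * ι ℝ z) = -(ι ℝ x * (ι ℝ y * ι ℝ z)) := by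
  rw [← mul_assoc, ← mul_assoc, sw y x, neg_mul]

private lemma p3 (x y z : Fin 7 → ℝ) :
    ι ℝ y * (ι ℝ z * ι ℝ x) = ι ℝ x * (ι ℝ y * ι ℝ z) := by
  rw [sw z x, mul_neg, p2, neg_neg]

private lemma p4 (x y z : Fin 7 → ℝ) :
    ι ℝ z * (ι ℝ x * ι ℝ y) = ι ℝ x * (ι ℝ y * ι ℝ z) := by
  rw [← mul_assoc, sw z x, neg_mul, mul_assoc, p1, neg_neg]

private lemma p5 (x y z : Fin 7 → ℝ) :
    ι ℝ z * (ι ℝ y * ι ℝ x) = -(ι ℝ x * (ι ℝ y * ι ℝ z)) := by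
  rw [sw y x, mul_neg, p4]

private lemma zxyx (x y : Fin 7 → ℝ) : ι ℝ x * (ι ℝ y * ι ℝ x) = 0 := by
  rw [sw y x, mul_neg, ← mul_assoc, ι_sq_zero, zero_mul, neg_zero]

set_option maxHeartbeats 2000000 in
/-- In the orthonormal-type frame e, the three-form
φ = 3(θ²∧θ³∧θ⁷ + θ¹∧θ⁵∧θ⁶) + θ⁴∧(θ¹∧θ⁷ + 6θ²∧θ⁶ − 15θ³∧θ⁵) equals the standard split
G₂ three-form e¹²³ − e¹⁴⁵ − e¹⁶⁷ − e²⁴⁶ + e²⁵⁷ + e³⁴⁷ + e³⁵⁶ up to a nonzero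
constant multiple. -/
theorem stmt_7 (θ : Fin 7 → (Fin 7 → ℝ)) (hθ : LinearIndependent ℝ θ) :
    ∃ c : ℝ, c ≠ 0 ∧
      (3 : ℝ) • (ι ℝ (θ 1) * ι ℝ (θ 2) * ι ℝ (θ 6) + ι ℝ (θ 0) * ι ℝ (θ 4) * ι ℝ (θ 5)) +
        ι ℝ (θ 3) * (ι ℝ (θ 0) * ι ℝ (θ 6) + (6 : ℝ) • (ι ℝ (θ 1) * ι ℝ (θ 5)) -
          (15 : ℝ) • (ι ℝ (θ 2) * ι ℝ (θ 4))) =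
      c • (ι ℝ (Evec θ 0) * ι ℝ (Evec θ 1) * ι ℝ (Evec θ 2) -
        ι ℝ (Evec θ 0) * ι ℝ (Evec θ 3) * ι ℝ (Evec θ 4) -
        ι ℝ (Evec θ 0) * ι ℝ (Evec θ 5) * ι ℝ (Evec θ 6) -
        ι ℝ (Evec θ 1) * ι ℝ (Evec θ 3) * ι ℝ (Evec θ 5) +
        ι ℝ (Evec θ 1) * ι ℝ (Evec θ 4) * ι ℝ (Evec θ 6) +
        ι ℝ (Evec θ 2) * ι ℝ (Evec θ 3) * ι ℝ (Evec θ 6) +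
        ι ℝ (Evec θ 2) * ι ℝ (Evec θ 4) * ι ℝ (Evec θ 5)) := by
  refine ⟨Real.sqrt 10 / 5, by positivity, ?_⟩
  have h6 : Real.sqrt 6 * Real.sqrt 6 = 6 := Real.mul_self_sqrt (by norm_num)
  have h15 : Real.sqrt 15 * Real.sqrt 15 = 15 := Real.mul_self_sqrt (by norm_num)
  have h10 : Real.sqrt 10 * Real.sqrt 10 = 10 := Real.mul_self_sqrt (by norm_num)
  have h615 : Real.sqrt 6 * Real.sqrt 15 = 3 * Real.sqrt 10 := by
    rw [← Real.sqrt_mul (by norm_num : (6:ℝ) ≥ 0) 15]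
    rw [show (6:ℝ) * 15 = 3^2 * 10 by norm_num, Real.sqrt_mul (by positivity) 10,
      Real.sqrt_sq (by norm_num)]
  simp only [Evec, map_smul, map_add, map_sub, smul_add, smul_sub, mul_add, add_mul,
    mul_sub, sub_mul, smul_mul_assoc, mul_smul_comm, mul_assoc, smul_smul,
    ι_sq_zero, zxyx, mul_zero, zero_mul, smul_zero, smul_neg, neg_neg,
    p1 (θ 0) (θ 2) (θ 5), p1 (θ 0) (θ 4) (θ 5), p2 (θ 0) (θ 1) (θ 2),
    p2 (θ 0) (θ 1) (θ 4), p1 (θ 1) (θ 2) (θ 6), p1 (θ 1) (θ 4) (θ 6),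
    p4 (θ 0) (θ 1) (θ 2), p2 (θ 0) (θ 2) (θ 5), p3 (θ 1) (θ 2) (θ 6),
    p1 (θ 2) (θ 5) (θ 6), p2 (θ 0) (θ 3) (θ 6), p2 (θ 1) (θ 3) (θ 5),
    p2 (θ 2) (θ 3) (θ 4), p4 (θ 0) (θ 1) (θ 4), p2 (θ 0) (θ 4) (θ 5),
    p5 (θ 2) (θ 3) (θ 4), p3 (θ 1) (θ 4) (θ 6), p1 (θ 4) (θ 5) (θ 6),
    p4 (θ 0) (θ 2) (θ 5), p4 (θ 0) (θ 4) (θ 5), p5 (θ 1) (θ 3) (θ 5),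
    p3 (θ 2) (θ 5) (θ 6), p3 (θ 4) (θ 5) (θ 6), p4 (θ 1) (θ 2) (θ 6),
    p4 (θ 1) (θ 4) (θ 6), p5 (θ 0) (θ 3) (θ 6), p5 (θ 2) (θ 5) (θ 6),
    p5 (θ 4) (θ 5) (θ 6)]
  match_scalars <;> field_simp <;> nlinarith [h6, h15, h10, h615, Real.sqrt_nonneg 10,
    Real.sqrt_nonneg 6, Real.sqrt_nonneg 15]
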